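/- arXiv:1207.5062 — 2 statements merged into one kernel-verified Lean document; each statement's English description precedes it below -/
import Mathlib

section
/- Let d ≥ 2, t ∈ (0,1), and λ, μ > 0, and let A, B ⊆ ℝ^d be Borel sets. Put S = tA + (1−t)B and 𝒮(s) = {x ∈ ℝ^{d−1} : the inner Lebesgue measure of S_x exceeds s}. Then t·𝒜(λ) + (1−t)·ℬ(μ) ⊆ 𝒮(tλ + (1−t)μ). Consequently, if 𝒜(λ) and ℬ(μ) both have positive (d−1)-dimensional Lebesgue measure, then the outer measure of 𝒮(tλ + (1−t)μ) is at least |𝒜(λ)|^t · |ℬ(μ)|^{1−t}. -/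
open MeasureTheory Set Pointwise Filter ENNReal

noncomputable section

abbrev Edim (n : ℕ) := EuclideanSpace ℝ (Fin n)

/-- We identify `ℝ^d` with `ℝ^{d-1} × ℝ`. -/
abbrev Sp (n : ℕ) := Edim n × ℝ

/-- The vertical slice `A_x ⊆ ℝ` of a set `A ⊆ ℝ^{n} × ℝ`. -/
def vslice {n : ℕ} (A : Set (Sp n)) (x : Edim n) : Set ℝ := {y | (x, y) ∈ A}

/-- The horizontal slice of `A ⊆ ℝ^n × ℝ` at height `t`. -/
def hslice {n : ℕ} (A : Set (Sp n)) (t : ℝ) : Set (Edim n) := {x | (x, t) ∈ A}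

/-- Steiner symmetrization `A^⋆`: the slice `(A^⋆)_x` is the open interval
`(-|A_x|/2, |A_x|/2)` centered at `0` of length `|A_x|` (empty if `|A_x| = 0`). -/
def steiner {n : ℕ} (A : Set (Sp n)) : Set (Sp n) :=
  {p | ENNReal.ofReal (2 * |p.2|) < volume (vslice A p.1)}

/-- Schwarz symmetrization `A^*`: the horizontal slice of `A^*` at height `t` is the open
ball in `ℝ^n` centered at `0` whose measure equals that of the corresponding slice of `A`. -/
def schwarz {n : ℕ} (A : Set (Sp n)) : Set (Sp n) :=
  {p | volume (Metric.ball (0 : Edim n) ‖p.1‖) < volume (hslice A p.2)}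

/-- The symmetrization `A^♮ = (A^⋆)^*`. -/
def natSymm {n : ℕ} (A : Set (Sp n)) : Set (Sp n) := schwarz (steiner A)


/-- The superlevel set `𝒜(s) = {x ∈ ℝ^{d-1} : |A_x| > s}`. -/
def levelSet {n : ℕ} (A : Set (Sp n)) (s : ℝ) : Set (Edim n) :=
  {x | ENNReal.ofReal s < volume (vslice A x)}

/-- Inner Lebesgue measure of a subset of `ℝ`: the supremum of the measures of its
measurable subsets. -/
def innerVol (s : Set ℝ) : ℝ≥0∞ :=
  ⨆ (K : Set ℝ) (_ : K ⊆ s) (_ : MeasurableSet K), volume K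



lemma compact_add_1d {K L : Set ℝ} (hK : IsCompact K) (hL : IsCompact L)
    (hKne : K.Nonempty) (hLne : L.Nonempty) :
    volume K + volume L ≤ volume (K + L) := by
  set a := sSup K
  set b := sInf L
  have haK : a ∈ K := hK.sSup_mem hKne
  have hbL : b ∈ L := hL.sInf_mem hLne
  have h1 : K + {b} ⊆ K + L := add_subset_add_left (by simpa using hbL)
  have h2 : {a} + L ⊆ K + L := add_subset_add_right (by simpa using haK)
  have hsub : (K + {b}) ∪ ({a} + L) ⊆ K + L := union_subset h1 h2
  have hm1 : MeasurableSet (K + {b}) := by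
    rw [Set.add_singleton]
    exact ((Homeomorph.addRight b).isCompact_image.2 hK).measurableSet
  have hm2 : MeasurableSet ({a} + L) := by
    rw [Set.singleton_add]
    exact ((Homeomorph.addLeft a).isCompact_image.2 hL).measurableSet
  have hinter : (K + {b}) ∩ ({a} + L) ⊆ {a + b} := by
    rintro x ⟨hx1, hx2⟩
    rw [Set.add_singleton] at hx1
    rw [Set.singleton_add] at hx2
    obtain ⟨k, hk, rfl⟩ := hx1
    obtain ⟨l, hl, hkl⟩ := hx2
    have hka : k ≤ a := le_csSup hK.bddAbove hk
    have hbl : b ≤ l := csInf_le hL.bddBelow hl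
    simp only [] at hkl
    have hkl' : a + l = k + b := hkl
    simp only [mem_singleton_iff]
    linarith
  have hiz : volume ((K + {b}) ∩ ({a} + L)) = 0 :=
    le_antisymm (le_trans (measure_mono hinter) (by simp)) (zero_le)
  calc volume K + volume L = volume (K + {b}) + volume ({a} + L) := by
        simp [Set.add_singleton, Set.singleton_add]
    _ = volume ((K + {b}) ∪ ({a} + L)) + volume ((K + {b}) ∩ ({a} + L)) :=
        (measure_union_add_inter' hm1 _).symm
    _ = volume ((K + {b}) ∪ ({a} + L)) := by rw [hiz, add_zero]
    _ ≤ volume (K + L) := measure_mono hsub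



lemma le_innerVol {K s : Set ℝ} (h : K ⊆ s) (hm : MeasurableSet K) :
    volume K ≤ innerVol s := by
  unfold innerVol
  exact le_iSup_of_le K (le_iSup_of_le h (le_iSup_of_le hm le_rfl))

lemma innerVol_le {s M : Set ℝ} (h : s ⊆ M) (hM : MeasurableSet M) :
    innerVol s ≤ volume M := by
  unfold innerVol
  exact iSup_le fun K => iSup_le fun hK => iSup_le fun _ => measure_mono (hK.trans h)

lemma vol_smul_1d (t : ℝ) (ht : 0 ≤ t) (K : Set ℝ) :
    volume (t • K) = ENNReal.ofReal t * volume K := by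
  have := MeasureTheory.Measure.addHaar_smul (volume : Measure ℝ) t K
  simpa [abs_of_nonneg ht] using this

lemma measure_eq_iSup_compact_ne {A : Set ℝ} (hA : MeasurableSet A) {a0 : ℝ} (ha0 : a0 ∈ A) :
    volume A = ⨆ (K : {K : Set ℝ // K ⊆ A ∧ IsCompact K ∧ K.Nonempty}), volume (K : Set ℝ) := by
  apply le_antisymm
  · apply le_of_forall_lt
    intro r hr
    obtain ⟨K, hKA, hKc, hKv⟩ := hA.exists_lt_isCompact hr
    refine lt_of_lt_of_le ?_ (le_iSup (fun (K : {K : Set ℝ // K ⊆ A ∧ IsCompact K ∧ K.Nonempty}) =>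
      volume (K : Set ℝ)) ⟨K ∪ {a0}, union_subset hKA (by simpa using ha0),
      hKc.union isCompact_singleton, by simp⟩)
    exact hKv.trans_le (measure_mono subset_union_left)
  · exact iSup_le fun K => measure_mono K.2.1

lemma one_dim_BM_inner {t s : ℝ} (ht : 0 < t) (hs : 0 < s) {A B : Set ℝ}
    (hA : MeasurableSet A) (hB : MeasurableSet B)
    (hA0 : 0 < volume A) (hB0 : 0 < volume B) :
    ENNReal.ofReal t * volume A + ENNReal.ofReal s * volume B ≤ innerVol (t • A + s • B) := by
  obtain ⟨a0, ha0⟩ := nonempty_of_measure_ne_zero hA0.ne'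
  obtain ⟨b0, hb0⟩ := nonempty_of_measure_ne_zero hB0.ne'
  rw [measure_eq_iSup_compact_ne hA ha0, measure_eq_iSup_compact_ne hB hb0,
    ENNReal.mul_iSup, ENNReal.mul_iSup]
  have : Nonempty {K : Set ℝ // K ⊆ A ∧ IsCompact K ∧ K.Nonempty} :=
    ⟨⟨{a0}, by simpa using ha0, isCompact_singleton, by simp⟩⟩
  have : Nonempty {K : Set ℝ // K ⊆ B ∧ IsCompact K ∧ K.Nonempty} :=
    ⟨⟨{b0}, by simpa using hb0, isCompact_singleton, by simp⟩⟩
  refine ENNReal.iSup_add_iSup_le fun K L => ?_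
  calc ENNReal.ofReal t * volume (K : Set ℝ) + ENNReal.ofReal s * volume (L : Set ℝ)
      = volume (t • (K : Set ℝ)) + volume (s • (L : Set ℝ)) := by
        rw [vol_smul_1d t ht.le, vol_smul_1d s hs.le]
    _ ≤ volume (t • (K : Set ℝ) + s • (L : Set ℝ)) :=
        compact_add_1d (K.2.2.1.smul t) (L.2.2.1.smul s)
          (K.2.2.2.smul_set) (L.2.2.2.smul_set)
    _ ≤ innerVol (t • A + s • B) :=
        le_innerVol (add_subset_add (smul_set_mono K.2.1) (smul_set_mono L.2.1))
          ((K.2.2.1.smul t).add (L.2.2.1.smul s)).measurableSet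

lemma geom_le_arith {t s : ℝ} (ht : 0 < t) (hs : 0 < s) (hts : t + s = 1) (a b : ℝ≥0∞) :
    a ^ t * b ^ s ≤ ENNReal.ofReal t * a + ENNReal.ofReal s * b := by
  rcases eq_or_ne a 0 with rfl | ha0
  · rw [ENNReal.zero_rpow_of_pos ht, zero_mul]; exact zero_le
  rcases eq_or_ne b 0 with rfl | hb0
  · rw [ENNReal.zero_rpow_of_pos hs, mul_zero]; exact zero_le
  rcases eq_or_ne a ⊤ with rfl | hat
  · refine le_trans ?_ le_self_add
    rw [ENNReal.mul_top (by positivity)]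
    exact le_top
  rcases eq_or_ne b ⊤ with rfl | hbt
  · refine le_trans ?_ le_add_self
    rw [ENNReal.mul_top (by positivity)]
    exact le_top
  lift a to NNReal using hat
  lift b to NNReal using hbt
  rw [← ENNReal.coe_rpow_of_ne_zero (by exact_mod_cast ha0),
    ← ENNReal.coe_rpow_of_ne_zero (by exact_mod_cast hb0),
    ENNReal.ofReal, ENNReal.ofReal, ← ENNReal.coe_mul, ← ENNReal.coe_mul, ← ENNReal.coe_mul,
    ← ENNReal.coe_add, ENNReal.coe_le_coe]
  have := NNReal.geom_mean_le_arith_mean2_weighted t.toNNReal s.toNNReal a b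
    (by rw [← Real.toNNReal_add ht.le hs.le, hts, Real.toNNReal_one])
  simpa [Real.coe_toNNReal _ ht.le, Real.coe_toNNReal _ hs.le] using this

lemma layercake_ennreal {α : Type*} [MeasurableSpace α] (μ : Measure α)
    {f : α → ℝ≥0∞} (hf : Measurable f) :
    ∫⁻ x, f x ∂μ = ∫⁻ r in Set.Ioi (0:ℝ), μ {x | ENNReal.ofReal r < f x} := by
  rcases eq_or_ne (μ {x | f x = ⊤}) 0 with hz | hz
  · -- f is a.e. finite
    have hae : ∀ᵐ x ∂μ, f x ≠ ⊤ := by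
      rw [MeasureTheory.ae_iff]
      simpa using hz
    have h1 : ∫⁻ x, f x ∂μ = ∫⁻ x, ENNReal.ofReal ((f x).toReal) ∂μ := by
      apply lintegral_congr_ae
      filter_upwards [hae] with x hx
      rw [ENNReal.ofReal_toReal hx]
    rw [h1, lintegral_eq_lintegral_meas_lt μ (Eventually.of_forall fun x => ENNReal.toReal_nonneg)
      (hf.ennreal_toReal.aemeasurable)]
    apply setLIntegral_congr_fun measurableSet_Ioi
    intro r hr
    apply measure_congr
    have : {a | r < (f a).toReal} =ᵐ[μ] {x | ENNReal.ofReal r < f x} := by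
      apply eventuallyEq_of_mem (s := {x | f x ≠ ⊤}) hae
      intro x (hx : f x ≠ ⊤)
      show (r < (f x).toReal) = (ENNReal.ofReal r < f x)
      rw [eq_iff_iff, ENNReal.ofReal_lt_iff_lt_toReal (le_of_lt hr) hx]
    exact this
  · -- {f = ⊤} has positive measure: both sides are ⊤
    have h1 : ∫⁻ x, f x ∂μ = ⊤ := by
      refine eq_top_iff.2 ?_
      calc (⊤ : ℝ≥0∞) = ∫⁻ _ in {x | f x = ⊤}, ⊤ ∂μ := by
            rw [setLIntegral_const]
            rw [ENNReal.top_mul hz]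
        _ = ∫⁻ x in {x | f x = ⊤}, f x ∂μ := by
            apply setLIntegral_congr_fun (hf (measurableSet_singleton ⊤))
            exact fun x hx => (show f x = ⊤ from hx).symm
        _ ≤ ∫⁻ x, f x ∂μ := setLIntegral_le_lintegral _ _
    have h2 : ∫⁻ r in Set.Ioi (0:ℝ), μ {x | ENNReal.ofReal r < f x} = ⊤ := by
      refine eq_top_iff.2 ?_
      calc (⊤ : ℝ≥0∞) = ∫⁻ _ in Set.Ioi (0:ℝ), μ {x | f x = ⊤} := by
            rw [setLIntegral_const, Real.volume_Ioi, ENNReal.mul_top' ]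
            simp [hz]
        _ ≤ ∫⁻ r in Set.Ioi (0:ℝ), μ {x | ENNReal.ofReal r < f x} :=
            lintegral_mono fun r => measure_mono fun x hx => by
              simp only [mem_setOf_eq] at hx ⊢
              rw [hx]; exact ENNReal.ofReal_lt_top
    rw [h1, h2]

lemma cov_lemma {K : ℝ} (hK : 0 < K) (φ : ℝ → ℝ≥0∞) (hφ : Measurable φ) :
    ∫⁻ r in Set.Ioo 0 K, φ r = ENNReal.ofReal K * ∫⁻ u in Set.Ioo (0:ℝ) 1, φ (K * u) := by
  have hmap : Measure.map (fun u : ℝ => K * u) volume = ENNReal.ofReal |K⁻¹| • volume :=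
    Real.map_volume_mul_left (ne_of_gt hK)
  have hpre : (fun u : ℝ => K * u) ⁻¹' (Set.Ioo 0 K) = Set.Ioo 0 1 := by
    ext u
    simp only [mem_preimage, mem_Ioo]
    constructor
    · rintro ⟨h1, h2⟩
      have hu : 0 < u := by
        by_contra hu
        push_neg at hu
        nlinarith
      exact ⟨hu, by nlinarith⟩
    · rintro ⟨h1, h2⟩
      constructor
      · positivity
      · nlinarith
  have hrest : (Measure.map (fun u : ℝ => K * u) volume).restrict (Set.Ioo 0 K)
      = Measure.map (fun u : ℝ => K * u) (volume.restrict (Set.Ioo 0 1)) := by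
    rw [Measure.restrict_map (measurable_const_mul K) measurableSet_Ioo, hpre]
  calc ∫⁻ r in Set.Ioo 0 K, φ r
      = ENNReal.ofReal K * (ENNReal.ofReal |K⁻¹| * ∫⁻ r in Set.Ioo 0 K, φ r) := by
        rw [← mul_assoc, ← ENNReal.ofReal_mul hK.le, abs_of_nonneg (by positivity),
          mul_inv_cancel₀ (ne_of_gt hK), ENNReal.ofReal_one, one_mul]
    _ = ENNReal.ofReal K * ∫⁻ r, φ r ∂((ENNReal.ofReal |K⁻¹| • volume).restrict (Set.Ioo 0 K)) := by
        rw [Measure.restrict_smul, lintegral_smul_measure, smul_eq_mul]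
    _ = ENNReal.ofReal K * ∫⁻ r, φ r ∂(Measure.map (fun u : ℝ => K * u) (volume.restrict (Set.Ioo 0 1))) := by
        rw [← hmap, hrest]
    _ = ENNReal.ofReal K * ∫⁻ u in Set.Ioo (0:ℝ) 1, φ (K * u) := by
        rw [lintegral_map hφ (measurable_const_mul K)]

section PL1
variable {t s : ℝ}

lemma meas_pos_of_lt_essSup {f : ℝ → ℝ≥0∞} {a : ℝ≥0∞} (ha : a < essSup f volume) :
    0 < volume {x | a < f x} := by
  by_contra hcon
  push_neg at hcon
  have h0 : volume {x | a < f x} = 0 := le_antisymm hcon (zero_le)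
  have : essSup f volume ≤ a := by
    refine essSup_le_of_ae_le _ ?_
    rw [EventuallyLE, MeasureTheory.ae_iff]
    simpa using h0
  exact absurd ha (not_lt.2 this)

/-- Key level-set inclusion bound. -/
lemma levelBound (ht : 0 < t) (hs : 0 < s) {f g h : ℝ → ℝ≥0∞}
    (hf : Measurable f) (hg : Measurable g) (hh : Measurable h)
    (hyp : ∀ x y, f x ^ t * g y ^ s ≤ h (t * x + s * y))
    {a b r : ℝ} (ha : 0 < a) (hb : 0 < b) (hr : 0 ≤ r) (hab : r < a ^ t * b ^ s)
    (hF : 0 < volume {x | ENNReal.ofReal a < f x})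
    (hG : 0 < volume {x | ENNReal.ofReal b < g x}) :
    ENNReal.ofReal t * volume {x | ENNReal.ofReal a < f x}
      + ENNReal.ofReal s * volume {x | ENNReal.ofReal b < g x}
      ≤ volume {z | ENNReal.ofReal r < h z} := by
  set F := {x | ENNReal.ofReal a < f x}
  set G := {x | ENNReal.ofReal b < g x}
  have hFm : MeasurableSet F := hf measurableSet_Ioi
  have hGm : MeasurableSet G := hg measurableSet_Ioi
  have hincl : t • F + s • G ⊆ {z | ENNReal.ofReal r < h z} := by
    rintro z ⟨x', ⟨x, hx, rfl⟩, y', ⟨y, hy, rfl⟩, rfl⟩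
    have h1 : ENNReal.ofReal (a ^ t * b ^ s) ≤ f x ^ t * g y ^ s := by
      rw [ENNReal.ofReal_mul (by positivity), ← ENNReal.ofReal_rpow_of_pos ha,
        ← ENNReal.ofReal_rpow_of_pos hb]
      exact mul_le_mul' (ENNReal.rpow_le_rpow (le_of_lt hx) ht.le)
        (ENNReal.rpow_le_rpow (le_of_lt hy) hs.le)
    refine lt_of_lt_of_le (lt_of_lt_of_le ?_ h1) (hyp x y)
    exact ENNReal.ofReal_lt_ofReal_iff (by positivity) |>.2 hab
  calc ENNReal.ofReal t * volume F + ENNReal.ofReal s * volume G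
      ≤ innerVol (t • F + s • G) := one_dim_BM_inner ht hs hFm hGm hF hG
    _ ≤ volume {z | ENNReal.ofReal r < h z} :=
        innerVol_le hincl (hh measurableSet_Ioi)

lemma PL1_top (ht : 0 < t) (hs : 0 < s) {f g h : ℝ → ℝ≥0∞}
    (hf : Measurable f) (hg : Measurable g) (hh : Measurable h)
    (hyp : ∀ x y, f x ^ t * g y ^ s ≤ h (t * x + s * y))
    (hcT : essSup f volume = ⊤) (hd0 : 0 < essSup g volume) :
    ∫⁻ x, h x = ⊤ := by
  obtain ⟨b0e, hb0e0, hb0ed⟩ := exists_between hd0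
  have hb0et : b0e ≠ ⊤ := (lt_of_lt_of_le hb0ed le_top).ne
  set b0 := b0e.toReal with hb0def
  have hb0pos : 0 < b0 := ENNReal.toReal_pos hb0e0.ne' hb0et
  have hb0eq : ENNReal.ofReal b0 = b0e := ENNReal.ofReal_toReal hb0et
  have hG : 0 < volume {x | ENNReal.ofReal b0 < g x} := by
    apply meas_pos_of_lt_essSup
    rw [hb0eq]; exact hb0ed
  set ε := ENNReal.ofReal s * volume {x | ENNReal.ofReal b0 < g x} with hεdef
  have hε : 0 < ε := ENNReal.mul_pos (by simp [ENNReal.ofReal_eq_zero, not_le, hs]) hG.ne'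
  have key : ∀ r : ℝ, 0 < r → ε ≤ volume {z | ENNReal.ofReal r < h z} := by
    intro r hr
    set a := ((r + 1) / b0 ^ s) ^ t⁻¹ with hadef
    have hb0s : (0:ℝ) < b0 ^ s := Real.rpow_pos_of_pos hb0pos s
    have hapos : 0 < a := Real.rpow_pos_of_pos (by positivity) _
    have hat : a ^ t = (r + 1) / b0 ^ s := Real.rpow_inv_rpow (by positivity) (ne_of_gt ht)
    have hab : r < a ^ t * b0 ^ s := by
      rw [hat, div_mul_cancel₀ _ (ne_of_gt hb0s)]
      linarith
    have hF : 0 < volume {x | ENNReal.ofReal a < f x} := by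
      apply meas_pos_of_lt_essSup
      rw [hcT]; exact ENNReal.ofReal_lt_top
    refine le_trans ?_ (levelBound ht hs hf hg hh hyp hapos hb0pos hr.le hab hF hG)
    exact le_add_self
  rw [layercake_ennreal volume hh]
  rw [eq_top_iff]
  calc (⊤:ℝ≥0∞) = ∫⁻ _ in Set.Ioi (0:ℝ), ε := by
        rw [setLIntegral_const, Real.volume_Ioi, ENNReal.mul_top hε.ne']
    _ ≤ ∫⁻ r in Set.Ioi (0:ℝ), volume {z | ENNReal.ofReal r < h z} := by
        apply setLIntegral_mono' measurableSet_Ioi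
        intro r hr
        exact key r hr

lemma PL1 (ht : 0 < t) (hs : 0 < s) (hts : t + s = 1) {f g h : ℝ → ℝ≥0∞}
    (hf : Measurable f) (hg : Measurable g) (hh : Measurable h)
    (hyp : ∀ x y, f x ^ t * g y ^ s ≤ h (t * x + s * y)) :
    (∫⁻ x, f x) ^ t * (∫⁻ x, g x) ^ s ≤ ∫⁻ x, h x := by
  rcases eq_or_ne (∫⁻ x, f x) 0 with hX0 | hX0
  · rw [hX0, ENNReal.zero_rpow_of_pos ht, zero_mul]; exact zero_le
  rcases eq_or_ne (∫⁻ x, g x) 0 with hY0 | hY0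
  · rw [hY0, ENNReal.zero_rpow_of_pos hs, mul_zero]; exact zero_le
  have hc0 : 0 < essSup f volume := by
    rcases eq_or_ne (essSup f volume) 0 with hc | hc
    · exfalso
      apply hX0
      rw [← lintegral_zero]
      apply lintegral_congr_ae
      filter_upwards [ae_le_essSup f] with x hx
      rw [hc] at hx
      simpa using hx
    · exact pos_iff_ne_zero.2 hc
  have hd0 : 0 < essSup g volume := by
    rcases eq_or_ne (essSup g volume) 0 with hc | hc
    · exfalso
      apply hY0
      rw [← lintegral_zero]
      apply lintegral_congr_ae
      filter_upwards [ae_le_essSup g] with x hx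
      rw [hc] at hx
      simpa using hx
    · exact pos_iff_ne_zero.2 hc
  rcases eq_or_ne (essSup f volume) ⊤ with hcT | hcT
  · rw [PL1_top ht hs hf hg hh hyp hcT hd0]; exact le_top
  rcases eq_or_ne (essSup g volume) ⊤ with hdT | hdT
  · rw [PL1_top hs ht hg hf hh (fun x y => by rw [mul_comm, add_comm]; exact hyp y x) hdT hc0]
    exact le_top
  -- main case
  set cR := (essSup f volume).toReal with hcRdef
  set dR := (essSup g volume).toReal with hdRdef
  have hcR : 0 < cR := ENNReal.toReal_pos hc0.ne' hcT
  have hdR : 0 < dR := ENNReal.toReal_pos hd0.ne' hdT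
  have hcEq : ENNReal.ofReal cR = essSup f volume := ENNReal.ofReal_toReal hcT
  have hdEq : ENNReal.ofReal dR = essSup g volume := ENNReal.ofReal_toReal hdT
  set KR := cR ^ t * dR ^ s with hKRdef
  have hKR : 0 < KR := by positivity
  set F : ℝ → ℝ≥0∞ := fun r => volume {x | ENNReal.ofReal r < f x} with hFdef
  set G : ℝ → ℝ≥0∞ := fun r => volume {x | ENNReal.ofReal r < g x} with hGdef
  set H : ℝ → ℝ≥0∞ := fun r => volume {x | ENNReal.ofReal r < h x} with hHdef
  have hFanti : Antitone F := fun r r' hrr =>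
    measure_mono fun x hx => lt_of_le_of_lt (ENNReal.ofReal_le_ofReal hrr) hx
  have hGanti : Antitone G := fun r r' hrr =>
    measure_mono fun x hx => lt_of_le_of_lt (ENNReal.ofReal_le_ofReal hrr) hx
  have hHanti : Antitone H := fun r r' hrr =>
    measure_mono fun x hx => lt_of_le_of_lt (ENNReal.ofReal_le_ofReal hrr) hx
  -- union identity for right-continuity
  have union_id : ∀ (φ : ℝ → ℝ≥0∞) (e : ℝ) (u : ℝ), 0 < e → 0 < u → u < 1 →
      {x | ENNReal.ofReal (e * u) < φ x}
        = ⋃ n : ℕ, {x | ENNReal.ofReal (e * (u + (1 - u) / (n + 2))) < φ x} := by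
    intro φ e u he hu hu1
    apply Set.Subset.antisymm
    · intro x hx
      simp only [Set.mem_setOf_eq] at hx
      obtain ⟨q, hq0, hq1, hq2⟩ := ENNReal.lt_iff_exists_real_btwn.1 hx
      have hqpos : 0 < q := by
        by_contra hqp
        push_neg at hqp
        rw [ENNReal.ofReal_eq_zero.2 hqp] at hq1
        exact absurd hq1 (by simp)
      have heu : e * u < q := (ENNReal.ofReal_lt_ofReal_iff hqpos).1 hq1
      have hδ : 0 < q / e - u := by
        have : u < q / e := by
          rw [lt_div_iff₀ he]
          linarith
        linarith
      obtain ⟨n, hn⟩ := exists_nat_gt (1 / (q / e - u))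
      refine Set.mem_iUnion.2 ⟨n, ?_⟩
      simp only [Set.mem_setOf_eq]
      refine lt_of_le_of_lt (le_of_lt ?_) hq2
      apply ENNReal.ofReal_lt_ofReal_iff hqpos |>.2
      have h2 : (1 - u) / ((n:ℝ) + 2) < q / e - u := by
        have hn2 : (0:ℝ) < (n:ℝ) + 2 := by positivity
        rw [div_lt_iff₀ hn2]
        have h3 : 1 / (q / e - u) < (n:ℝ) := hn
        rw [div_lt_iff₀ hδ] at h3
        nlinarith
      have : u + (1 - u) / ((n:ℝ) + 2) < q / e := by linarith
      calc e * (u + (1 - u) / ((n:ℝ) + 2)) < e * (q / e) := by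
            apply mul_lt_mul_of_pos_left this he
        _ = q := by field_simp
    · apply Set.iUnion_subset
      intro n x hx
      simp only [Set.mem_setOf_eq] at hx ⊢
      refine lt_of_le_of_lt (ENNReal.ofReal_le_ofReal ?_) hx
      have : (0:ℝ) < (1 - u) / ((n:ℝ) + 2) := by
        have : (0:ℝ) < 1 - u := by linarith
        positivity
      nlinarith
  -- pointwise inequality on (0,1)
  have pointwise : ∀ u ∈ Set.Ioo (0:ℝ) 1,
      ENNReal.ofReal t * F (cR * u) + ENNReal.ofReal s * G (dR * u) ≤ H (KR * u) := by
    rintro u ⟨hu0, hu1⟩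
    set v : ℕ → ℝ := fun n => u + (1 - u) / (n + 2) with hvdef
    have hvum : ∀ n, u < v n := by
      intro n
      have : (0:ℝ) < (1 - u) / ((n:ℝ) + 2) := by
        have : (0:ℝ) < 1 - u := by linarith
        positivity
      simp only [hvdef]
      linarith
    have hvlt1 : ∀ n, v n < 1 := by
      intro n
      have h1u : (0:ℝ) < 1 - u := by linarith
      have : (1 - u) / ((n:ℝ) + 2) < 1 - u := by
        apply div_lt_self h1u
        have := Nat.cast_nonneg (α := ℝ) n
        linarith
      simp only [hvdef]
      linarith
    have hvanti : ∀ n m : ℕ, n ≤ m → v m ≤ v n := by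
      intro n m hnm
      have h1u : (0:ℝ) ≤ 1 - u := by linarith
      simp only [hvdef]
      have : (1 - u) / ((m:ℝ) + 2) ≤ (1 - u) / ((n:ℝ) + 2) := by
        have hnm' : (n:ℝ) ≤ (m:ℝ) := by exact_mod_cast hnm
        apply div_le_div_of_nonneg_left h1u (by positivity) (by linarith)
      linarith
    have hvpos : ∀ n, 0 < v n := fun n => hu0.trans (hvum n)
    have hsetF : Monotone (fun n : ℕ => {x | ENNReal.ofReal (cR * v n) < f x}) := by
      intro n m hnm x hx
      exact lt_of_le_of_lt (ENNReal.ofReal_le_ofReal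
        (mul_le_mul_of_nonneg_left (hvanti n m hnm) hcR.le)) hx
    have hsetG : Monotone (fun n : ℕ => {x | ENNReal.ofReal (dR * v n) < g x}) := by
      intro n m hnm x hx
      exact lt_of_le_of_lt (ENNReal.ofReal_le_ofReal
        (mul_le_mul_of_nonneg_left (hvanti n m hnm) hdR.le)) hx
    have hFeq : F (cR * u) = ⨆ n, F (cR * v n) := by
      show volume _ = ⨆ n, volume _
      rw [union_id f cR u hcR hu0 hu1]
      exact Directed.measure_iUnion hsetF.directed_le
    have hGeq : G (dR * u) = ⨆ n, G (dR * v n) := by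
      show volume _ = ⨆ n, volume _
      rw [union_id g dR u hdR hu0 hu1]
      exact Directed.measure_iUnion hsetG.directed_le
    have hmono1 : Monotone fun n => ENNReal.ofReal t * F (cR * v n) :=
      fun n m hnm => mul_le_mul_right (measure_mono (hsetF hnm)) _
    have hmono2 : Monotone fun n => ENNReal.ofReal s * G (dR * v n) :=
      fun n m hnm => mul_le_mul_right (measure_mono (hsetG hnm)) _
    calc ENNReal.ofReal t * F (cR * u) + ENNReal.ofReal s * G (dR * u)
        = (⨆ n, ENNReal.ofReal t * F (cR * v n)) + ⨆ n, ENNReal.ofReal s * G (dR * v n) := by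
          rw [hFeq, hGeq, ENNReal.mul_iSup, ENNReal.mul_iSup]
      _ = ⨆ n, (ENNReal.ofReal t * F (cR * v n) + ENNReal.ofReal s * G (dR * v n)) :=
          ENNReal.iSup_add_iSup_of_monotone hmono1 hmono2
      _ ≤ H (KR * u) := by
          apply iSup_le
          intro n
          have hapos : 0 < cR * v n := mul_pos hcR (hvpos n)
          have hbpos : 0 < dR * v n := mul_pos hdR (hvpos n)
          have hab : KR * u < (cR * v n) ^ t * (dR * v n) ^ s := by
            rw [Real.mul_rpow hcR.le (hvpos n).le, Real.mul_rpow hdR.le (hvpos n).le]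
            have hvts : (v n) ^ t * (v n) ^ s = v n := by
              rw [← Real.rpow_add (hvpos n), hts, Real.rpow_one]
            have h2 : cR ^ t * (v n) ^ t * (dR ^ s * (v n) ^ s)
                = cR ^ t * dR ^ s * ((v n) ^ t * (v n) ^ s) := by ring
            rw [h2, hvts, ← hKRdef]
            exact mul_lt_mul_of_pos_left (hvum n) hKR
          have hFpos : 0 < volume {x | ENNReal.ofReal (cR * v n) < f x} := by
            apply meas_pos_of_lt_essSup
            rw [← hcEq]
            exact (ENNReal.ofReal_lt_ofReal_iff hcR).2 (mul_lt_of_lt_one_right hcR (hvlt1 n))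
          have hGpos : 0 < volume {x | ENNReal.ofReal (dR * v n) < g x} := by
            apply meas_pos_of_lt_essSup
            rw [← hdEq]
            exact (ENNReal.ofReal_lt_ofReal_iff hdR).2 (mul_lt_of_lt_one_right hdR (hvlt1 n))
          exact levelBound ht hs hf hg hh hyp hapos hbpos (by positivity) hab hFpos hGpos
  -- measurability
  have hFmeas : Measurable F := hFanti.measurable
  have hGmeas : Measurable G := hGanti.measurable
  have hHmeas : Measurable H := hHanti.measurable
  -- tail vanishing and layer cake identities
  have vanish : ∀ (φ : ℝ → ℝ≥0∞) (e : ℝ), 0 < e → ENNReal.ofReal e = essSup φ volume →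
      ∀ r ∈ Set.Ici e, volume {x | ENNReal.ofReal r < φ x} = 0 := by
    intro φ e he heq r hr
    apply measure_mono_null (t := {x | ¬ (φ x ≤ essSup φ volume)})
    · intro x hx
      simp only [Set.mem_setOf_eq, not_le] at hx ⊢
      refine lt_of_le_of_lt ?_ hx
      rw [← heq]
      exact ENNReal.ofReal_le_ofReal hr
    · exact MeasureTheory.ae_iff.1 (ae_le_essSup φ)
  have layerhalf : ∀ (φ : ℝ → ℝ≥0∞) (e : ℝ), 0 < e →
      (∀ r ∈ Set.Ici e, volume {x | ENNReal.ofReal r < φ x} = 0) →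
      Measurable (fun r => volume {x | ENNReal.ofReal r < φ x}) →
      Measurable φ →
      ∫⁻ x, φ x = ENNReal.ofReal e
        * ∫⁻ u in Set.Ioo (0:ℝ) 1, volume {x | ENNReal.ofReal (e * u) < φ x} := by
    intro φ e he hvan hm hφm
    rw [layercake_ennreal volume hφm, ← Set.Ioo_union_Ici_eq_Ioi he,
      lintegral_union measurableSet_Ici
        (Set.disjoint_left.mpr fun r hr hr' => absurd hr.2 (not_lt.2 hr'))]
    have hz : ∫⁻ r in Set.Ici e, volume {x | ENNReal.ofReal r < φ x} = 0 := by
      rw [setLIntegral_congr_fun measurableSet_Ici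
        (fun r hr => hvan r hr)]
      simp
    rw [hz, add_zero, cov_lemma he _ hm]
  have hXeq := layerhalf f cR hcR (vanish f cR hcR hcEq) hFmeas hf
  have hYeq := layerhalf g dR hdR (vanish g dR hdR hdEq) hGmeas hg
  set IF := ∫⁻ u in Set.Ioo (0:ℝ) 1, F (cR * u) with hIFdef
  set IG := ∫⁻ u in Set.Ioo (0:ℝ) 1, G (dR * u) with hIGdef
  have hKReq : ENNReal.ofReal cR ^ t * ENNReal.ofReal dR ^ s = ENNReal.ofReal KR := by
    rw [hKRdef, ENNReal.ofReal_mul (by positivity), ENNReal.ofReal_rpow_of_pos hcR,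
      ENNReal.ofReal_rpow_of_pos hdR]
  have hmeasF' : Measurable fun u => ENNReal.ofReal t * F (cR * u) :=
    (hFmeas.comp (measurable_const_mul cR)).const_mul _
  calc (∫⁻ x, f x) ^ t * (∫⁻ x, g x) ^ s
      = (ENNReal.ofReal cR * IF) ^ t * (ENNReal.ofReal dR * IG) ^ s := by rw [hXeq, hYeq]
    _ = (ENNReal.ofReal cR ^ t * ENNReal.ofReal dR ^ s) * (IF ^ t * IG ^ s) := by
        rw [ENNReal.mul_rpow_of_nonneg _ _ ht.le, ENNReal.mul_rpow_of_nonneg _ _ hs.le]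
        ring
    _ ≤ (ENNReal.ofReal cR ^ t * ENNReal.ofReal dR ^ s)
          * (ENNReal.ofReal t * IF + ENNReal.ofReal s * IG) :=
        mul_le_mul_right (geom_le_arith ht hs hts _ _) _
    _ = ENNReal.ofReal KR * ∫⁻ u in Set.Ioo (0:ℝ) 1,
          (ENNReal.ofReal t * F (cR * u) + ENNReal.ofReal s * G (dR * u)) := by
        rw [hKReq, lintegral_add_left hmeasF',
          lintegral_const_mul' _ _ ENNReal.ofReal_ne_top,
          lintegral_const_mul' _ _ ENNReal.ofReal_ne_top]
    _ ≤ ENNReal.ofReal KR * ∫⁻ u in Set.Ioo (0:ℝ) 1, H (KR * u) :=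
        mul_le_mul_right (setLIntegral_mono' measurableSet_Ioo pointwise) _
    _ = ∫⁻ r in Set.Ioo 0 KR, H r := (cov_lemma hKR H hHmeas).symm
    _ ≤ ∫⁻ r in Set.Ioi 0, H r := lintegral_mono_set Set.Ioo_subset_Ioi_self
    _ = ∫⁻ x, h x := (layercake_ennreal volume hh).symm

end PL1

section PLn
variable {t s : ℝ}

lemma PL_pi (ht : 0 < t) (hs : 0 < s) (hts : t + s = 1) :
    ∀ (n : ℕ) (f g h : (Fin n → ℝ) → ℝ≥0∞), Measurable f → Measurable g → Measurable h →
    (∀ x y, f x ^ t * g y ^ s ≤ h (t • x + s • y)) →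
    (∫⁻ x, f x) ^ t * (∫⁻ x, g x) ^ s ≤ ∫⁻ x, h x := by
  intro n
  induction n with
  | zero =>
    intro f g h hf hg hh hyp
    have hconst : ∀ (φ : (Fin 0 → ℝ) → ℝ≥0∞), ∫⁻ x, φ x = φ default := by
      intro φ
      have : φ = fun _ => φ default := funext fun x => by rw [Subsingleton.elim x default]
      rw [this, lintegral_const]
      have : (volume : Measure (Fin 0 → ℝ)) Set.univ = 1 := by
        rw [MeasureTheory.volume_pi, MeasureTheory.Measure.pi_univ]
        simp
      rw [this, mul_one]
    rw [hconst f, hconst g, hconst h]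
    have := hyp default default
    rwa [Subsingleton.elim (t • (default : Fin 0 → ℝ) + s • default) default] at this
  | succ n ih =>
    intro f g h hf hg hh hyp
    set e := MeasurableEquiv.piFinSuccAbove (fun _ : Fin (n+1) => ℝ) 0 with hedef
    have he : MeasurePreserving e := volume_preserving_piFinSuccAbove (fun _ => ℝ) 0
    have hlin : ∀ x y : Fin (n+1) → ℝ, e (t • x + s • y) = t • e x + s • e y := fun x y => rfl
    have hlin' : ∀ p q, e.symm (t • p + s • q) = t • e.symm p + s • e.symm q := by
      intro p q
      apply e.injective
      rw [e.apply_symm_apply, hlin, e.apply_symm_apply, e.apply_symm_apply]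
    set f' : ℝ × (Fin n → ℝ) → ℝ≥0∞ := fun p => f (e.symm p) with hf'def
    set g' : ℝ × (Fin n → ℝ) → ℝ≥0∞ := fun p => g (e.symm p) with hg'def
    set h' : ℝ × (Fin n → ℝ) → ℝ≥0∞ := fun p => h (e.symm p) with hh'def
    have hf' : Measurable f' := hf.comp e.symm.measurable
    have hg' : Measurable g' := hg.comp e.symm.measurable
    have hh' : Measurable h' := hh.comp e.symm.measurable
    have hint : ∀ (φ : (Fin (n+1) → ℝ) → ℝ≥0∞), Measurable φ →
        ∫⁻ x, φ x = ∫⁻ a, ∫⁻ z, φ (e.symm (a, z)) := by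
      intro φ hφ
      rw [← (MeasurePreserving.symm _ he).lintegral_comp hφ]
      rw [MeasureTheory.Measure.volume_eq_prod, MeasureTheory.lintegral_prod
        (fun p => φ (e.symm p)) ((hφ.comp e.symm.measurable).aemeasurable)]
    set F : ℝ → ℝ≥0∞ := fun a => ∫⁻ z, f' (a, z) with hFdef
    set G : ℝ → ℝ≥0∞ := fun a => ∫⁻ z, g' (a, z) with hGdef
    set H : ℝ → ℝ≥0∞ := fun a => ∫⁻ z, h' (a, z) with hHdef
    have hFm : Measurable F := hf'.lintegral_prod_right'
    have hGm : Measurable G := hg'.lintegral_prod_right'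
    have hHm : Measurable H := hh'.lintegral_prod_right'
    have hFGH : ∀ a b : ℝ, F a ^ t * G b ^ s ≤ H (t * a + s * b) := by
      intro a b
      apply ih (fun z => f' (a, z)) (fun z => g' (b, z)) (fun z => h' (t * a + s * b, z))
        (hf'.comp measurable_prodMk_left) (hg'.comp measurable_prodMk_left)
        (hh'.comp measurable_prodMk_left)
      intro x y
      have hpair : ((t * a + s * b, t • x + s • y) : ℝ × (Fin n → ℝ))
          = t • (a, x) + s • (b, y) := rfl
      simp only [hf'def, hg'def, hh'def, hpair]
      rw [hlin']
      exact hyp _ _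
    rw [hint f hf, hint g hg, hint h hh]
    exact PL1 ht hs hts hFm hGm hHm hFGH

lemma BM_pi {n : ℕ} (ht : 0 < t) (hs : 0 < s) (hts : t + s = 1)
    {A B : Set (Fin n → ℝ)} (hA : MeasurableSet A) (hB : MeasurableSet B) :
    volume A ^ t * volume B ^ s ≤ volume (t • A + s • B) := by
  set S := t • A + s • B with hSdef
  set S' := toMeasurable volume S with hS'def
  have hS'm : MeasurableSet S' := measurableSet_toMeasurable _ _
  set f : (Fin n → ℝ) → ℝ≥0∞ := A.indicator 1 with hfdef
  set g : (Fin n → ℝ) → ℝ≥0∞ := B.indicator 1 with hgdef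
  set h : (Fin n → ℝ) → ℝ≥0∞ := S'.indicator 1 with hhdef
  have hyp : ∀ x y, f x ^ t * g y ^ s ≤ h (t • x + s • y) := by
    intro x y
    by_cases hx : x ∈ A
    · by_cases hy : y ∈ B
      · have hmem : t • x + s • y ∈ S' :=
          subset_toMeasurable _ _ (Set.add_mem_add (Set.smul_mem_smul_set hx)
            (Set.smul_mem_smul_set hy))
        simp [hfdef, hgdef, hhdef, Set.indicator_of_mem, hx, hy, hmem,
          ENNReal.one_rpow]
      · simp [hgdef, Set.indicator_of_notMem, hy, ENNReal.zero_rpow_of_pos hs]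
    · simp [hfdef, Set.indicator_of_notMem, hx, ENNReal.zero_rpow_of_pos ht]
  have h1 : ∫⁻ x, f x = volume A := lintegral_indicator_one hA
  have h2 : ∫⁻ x, g x = volume B := lintegral_indicator_one hB
  have h3 : ∫⁻ x, h x = volume S := by
    rw [hhdef, lintegral_indicator_one hS'm, hS'def, measure_toMeasurable]
  calc volume A ^ t * volume B ^ s = (∫⁻ x, f x) ^ t * (∫⁻ x, g x) ^ s := by rw [h1, h2]
    _ ≤ ∫⁻ x, h x := PL_pi ht hs hts n f g h
        (measurable_const.indicator hA) (measurable_const.indicator hB)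
        (measurable_const.indicator hS'm) hyp
    _ = volume S := h3

lemma BM_euclid {n : ℕ} (ht : 0 < t) (hs : 0 < s) (hts : t + s = 1)
    {A B : Set (EuclideanSpace ℝ (Fin n))} (hA : MeasurableSet A) (hB : MeasurableSet B) :
    volume A ^ t * volume B ^ s ≤ volume (t • A + s • B) := by
  set e := (MeasurableEquiv.toLp 2 (Fin n → ℝ)).symm with hedef
  have he : MeasurePreserving e := EuclideanSpace.volume_preserving_symm_measurableEquiv_toLp (ι := Fin n)
  have hlin : ∀ x y : EuclideanSpace ℝ (Fin n), e (t • x + s • y) = t • e x + s • e y :=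
    fun x y => rfl
  have hlin' : ∀ p q, e.symm (t • p + s • q) = t • e.symm p + s • e.symm q := by
    intro p q
    apply e.injective
    rw [e.apply_symm_apply, hlin, e.apply_symm_apply, e.apply_symm_apply]
  set A₁ := e.symm ⁻¹' A with hA1def
  set B₁ := e.symm ⁻¹' B with hB1def
  have hA₁ : MeasurableSet A₁ := e.symm.measurable hA
  have hB₁ : MeasurableSet B₁ := e.symm.measurable hB
  have hvol : ∀ X : Set (Fin n → ℝ), volume (e ⁻¹' X) = volume X :=
    fun X => he.measure_preimage_equiv X
  have hpreA : e ⁻¹' A₁ = A := by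
    ext x; simp [hA1def]
  have hpreB : e ⁻¹' B₁ = B := by
    ext x; simp [hB1def]
  have hpreS : e ⁻¹' (t • A₁ + s • B₁) = t • A + s • B := by
    ext x
    rw [Set.mem_preimage]
    constructor
    · rintro ⟨p', hp', q', hq', hx⟩
      obtain ⟨p, hp, rfl⟩ := hp'
      obtain ⟨q, hq, rfl⟩ := hq'
      have hx' : e x = t • p + s • q := hx.symm
      have hx2 : x = t • e.symm p + s • e.symm q := by
        rw [← hlin']
        exact (e.symm_apply_apply x).symm.trans (congrArg e.symm hx')
      rw [hx2]
      exact Set.add_mem_add (Set.smul_mem_smul_set hp) (Set.smul_mem_smul_set hq)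
    · rintro ⟨a', ha', b', hb', hx⟩
      obtain ⟨a, ha, rfl⟩ := ha'
      obtain ⟨b, hb, rfl⟩ := hb'
      have hx' : x = t • a + s • b := hx.symm
      rw [hx', hlin]
      refine Set.add_mem_add (Set.smul_mem_smul_set ?_) (Set.smul_mem_smul_set ?_)
      · show e.symm (e a) ∈ A
        simpa using ha
      · show e.symm (e b) ∈ B
        simpa using hb
  calc volume A ^ t * volume B ^ s
      = volume A₁ ^ t * volume B₁ ^ s := by rw [← hpreA, ← hpreB, hvol, hvol]
    _ ≤ volume (t • A₁ + s • B₁) := BM_pi ht hs hts hA₁ hB₁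
    _ = volume (t • A + s • B) := by rw [← hpreS, hvol]

end PLn

/-- For Borel `A, B ⊆ ℝ^d`, `t ∈ (0,1)`, and `λ, μ > 0`, with `S = tA + (1-t)B` and
`𝒮(s) = {x : inner measure of S_x > s}`: `t𝒜(λ) + (1-t)ℬ(μ) ⊆ 𝒮(tλ + (1-t)μ)`, and if
`𝒜(λ)` and `ℬ(μ)` have positive measure then
`|𝒮(tλ+(1-t)μ)| ≥ |𝒜(λ)|^t |ℬ(μ)|^{1-t}`. -/
theorem level_set_sumset_inclusion
    (d : ℕ) (hd : 2 ≤ d) (t lam mu : ℝ) (ht : t ∈ Set.Ioo (0:ℝ) 1)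
    (hlam : 0 < lam) (hmu : 0 < mu)
    (A B : Set (Sp (d-1))) (hA : MeasurableSet A) (hB : MeasurableSet B) :
    (t • levelSet A lam + (1-t) • levelSet B mu ⊆
      {x : Edim (d-1) |
        ENNReal.ofReal (t * lam + (1-t) * mu) < innerVol (vslice (t • A + (1-t) • B) x)}) ∧
    (0 < volume (levelSet A lam) → 0 < volume (levelSet B mu) →
      volume (levelSet A lam) ^ t * volume (levelSet B mu) ^ (1-t)
        ≤ volume {x : Edim (d-1) |
            ENNReal.ofReal (t * lam + (1-t) * mu) < innerVol (vslice (t • A + (1-t) • B) x)}) := by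
  obtain ⟨ht0, ht1⟩ := ht
  have hs0 : 0 < 1 - t := by linarith
  have hincl : t • levelSet A lam + (1-t) • levelSet B mu ⊆
      {x : Edim (d-1) |
        ENNReal.ofReal (t * lam + (1-t) * mu) < innerVol (vslice (t • A + (1-t) • B) x)} := by
    rintro x ⟨x1', hx1', x2', hx2', hx⟩
    obtain ⟨a, ha, rfl⟩ := hx1'
    obtain ⟨b, hb, rfl⟩ := hx2'
    have hx' : x = t • a + (1-t) • b := hx.symm
    show ENNReal.ofReal (t * lam + (1-t) * mu) < innerVol (vslice (t • A + (1-t) • B) x)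
    rw [hx']
    have hsA : MeasurableSet (vslice A a) := measurable_prodMk_left hA
    have hsB : MeasurableSet (vslice B b) := measurable_prodMk_left hB
    have ha' : ENNReal.ofReal lam < volume (vslice A a) := ha
    have hb' : ENNReal.ofReal mu < volume (vslice B b) := hb
    obtain ⟨K, hKA, hKc, hKv⟩ := hsA.exists_lt_isCompact ha'
    obtain ⟨L, hLB, hLc, hLv⟩ := hsB.exists_lt_isCompact hb'
    have hKne : K.Nonempty := by
      apply nonempty_of_measure_ne_zero (μ := volume)
      exact (lt_of_le_of_lt (zero_le) hKv).ne'
    have hLne : L.Nonempty := by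
      apply nonempty_of_measure_ne_zero (μ := volume)
      exact (lt_of_le_of_lt (zero_le) hLv).ne'
    have hsub : t • K + (1-t) • L ⊆ vslice (t • A + (1-t) • B) (t • a + (1-t) • b) := by
      rintro y ⟨y1', hy1', y2', hy2', hy⟩
      obtain ⟨y1, hy1, rfl⟩ := hy1'
      obtain ⟨y2, hy2, rfl⟩ := hy2'
      have hy' : y = t • y1 + (1-t) • y2 := hy.symm
      show (t • a + (1-t) • b, y) ∈ t • A + (1-t) • B
      rw [hy']
      have hpair : ((t • a + (1-t) • b, t • y1 + (1-t) • y2) : Sp (d-1))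
          = t • ((a, y1) : Sp (d-1)) + (1-t) • ((b, y2) : Sp (d-1)) := rfl
      rw [hpair]
      exact Set.add_mem_add (Set.smul_mem_smul_set (hKA hy1)) (Set.smul_mem_smul_set (hLB hy2))
    calc ENNReal.ofReal (t * lam + (1-t) * mu)
        = ENNReal.ofReal t * ENNReal.ofReal lam + ENNReal.ofReal (1-t) * ENNReal.ofReal mu := by
          rw [ENNReal.ofReal_add (by positivity) (by positivity), ENNReal.ofReal_mul ht0.le,
            ENNReal.ofReal_mul hs0.le]
      _ < ENNReal.ofReal t * volume K + ENNReal.ofReal (1-t) * volume L := by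
          apply ENNReal.add_lt_add
          · exact ENNReal.mul_lt_mul_right (by positivity) ENNReal.ofReal_ne_top hKv
          · exact ENNReal.mul_lt_mul_right (by positivity) ENNReal.ofReal_ne_top hLv
      _ = volume (t • K) + volume ((1-t) • L) := by
          rw [vol_smul_1d t ht0.le, vol_smul_1d _ hs0.le]
      _ ≤ volume (t • K + (1-t) • L) :=
          compact_add_1d (hKc.smul t) (hLc.smul (1-t)) (hKne.smul_set) (hLne.smul_set)
      _ ≤ innerVol (vslice (t • A + (1-t) • B) (t • a + (1-t) • b)) :=
          le_innerVol hsub ((hKc.smul t).add (hLc.smul (1-t))).measurableSet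
  refine ⟨hincl, fun _ _ => ?_⟩
  have hmA : MeasurableSet (levelSet A lam) := by
    have hh : levelSet A lam
        = (fun x => volume (vslice A x)) ⁻¹' (Set.Ioi (ENNReal.ofReal lam)) := rfl
    rw [hh]
    exact (measurable_measure_prodMk_left hA) measurableSet_Ioi
  have hmB : MeasurableSet (levelSet B mu) := by
    have hh : levelSet B mu
        = (fun x => volume (vslice B x)) ⁻¹' (Set.Ioi (ENNReal.ofReal mu)) := rfl
    rw [hh]
    exact (measurable_measure_prodMk_left hB) measurableSet_Ioi
  calc volume (levelSet A lam) ^ t * volume (levelSet B mu) ^ (1-t)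
      ≤ volume (t • levelSet A lam + (1-t) • levelSet B mu) :=
        BM_euclid ht0 hs0 (by ring) hmA hmB
    _ ≤ volume {x : Edim (d-1) |
          ENNReal.ofReal (t * lam + (1-t) * mu) < innerVol (vslice (t • A + (1-t) • B) x)} :=
        measure_mono hincl
end
end

section
/- Let d ≥ 2, γ ≥ 1, and ε > 0, and let A, B ⊆ ℝ^d be Borel sets such that |π(A)| ≤ γ and |π(B)| ≤ γ, such that |ℬ(s)| ≤ |𝒜(s − ε)| + ε for every s > ε, and such that |ℬ(s)| = 0 for every s > γ. Define σ = sup{s ≥ 0 : |ℬ(s)| > 0 and |𝒜(s + ε)| > 0} (σ = 0 if this set is empty). Then ∫_σ^∞ |ℬ(s)| ds ≤ 3γε. -/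
open MeasureTheory Set Pointwise Filter ENNReal

noncomputable section

/-- Lemma 6.1: if `|π(A)|, |π(B)| ≤ γ`, `|ℬ(s)| ≤ |𝒜(s-ε)| + ε` for all `s > ε`, and
`|ℬ(s)| = 0` for `s > γ`, then with
`σ = sup {s ≥ 0 : |ℬ(s)| > 0 and |𝒜(s+ε)| > 0}` (`σ = 0` for the empty set),
`∫_σ^∞ |ℬ(s)| ds ≤ 3γε`. -/
theorem tail_integral_bound
    (d : ℕ) (hd : 2 ≤ d) (γ ε : ℝ) (hγ : 1 ≤ γ) (hε : 0 < ε)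
    (A B : Set (Sp (d-1))) (hA : MeasurableSet A) (hB : MeasurableSet B)
    (hπA : volume (Prod.fst '' A) ≤ ENNReal.ofReal γ)
    (hπB : volume (Prod.fst '' B) ≤ ENNReal.ofReal γ)
    (hcompare : ∀ s : ℝ, ε < s →
      volume (levelSet B s) ≤ volume (levelSet A (s - ε)) + ENNReal.ofReal ε)
    (hvanish : ∀ s : ℝ, γ < s → volume (levelSet B s) = 0) :
    ∫⁻ s in Set.Ioi
        (sSup {s : ℝ | 0 ≤ s ∧ 0 < volume (levelSet B s) ∧ 0 < volume (levelSet A (s + ε))}),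
      volume (levelSet B s)
      ≤ ENNReal.ofReal (3 * γ * ε) := by
  set S := {s : ℝ | 0 ≤ s ∧ 0 < volume (levelSet B s) ∧ 0 < volume (levelSet A (s + ε))}
    with hSdef
  set σ := sSup S with hσdef
  have hγ0 : (0:ℝ) ≤ γ := le_trans zero_le_one hγ
  have hanti : Antitone (fun s => volume (levelSet B s)) := by
    intro s t hst
    exact measure_mono fun x hx => lt_of_le_of_lt (ENNReal.ofReal_le_ofReal hst) hx
  have hsub : ∀ s : ℝ, levelSet B s ⊆ Prod.fst '' B := by
    intro s x hx
    have hne : (vslice B x).Nonempty := by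
      by_contra h
      rw [Set.not_nonempty_iff_eq_empty] at h
      simp only [levelSet, mem_setOf_eq, h, measure_empty] at hx
      exact (not_lt.2 zero_le) hx
    obtain ⟨y, hy⟩ := hne
    exact ⟨(x, y), hy, rfl⟩
  have hfγ : ∀ s : ℝ, volume (levelSet B s) ≤ ENNReal.ofReal γ :=
    fun s => le_trans (measure_mono (hsub s)) hπB
  have hSbdd : BddAbove S := by
    refine ⟨γ, fun s hs => ?_⟩
    by_contra h
    exact hs.2.1.ne' (hvanish s (not_le.1 h))
  have hσ0 : 0 ≤ σ := by
    rcases S.eq_empty_or_nonempty with h | ⟨s, hs⟩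
    · rw [hσdef, h, Real.sSup_empty]
    · exact le_trans hs.1 (le_csSup hSbdd hs)
  have hkey : ∀ s : ℝ, σ + 2 * ε < s → volume (levelSet B s) ≤ ENNReal.ofReal ε := by
    intro s hs
    have ht : σ < s - 2 * ε := by linarith
    have htS : s - 2 * ε ∉ S := fun h => (le_csSup hSbdd h).not_gt ht
    rw [hSdef, mem_setOf_eq] at htS
    push_neg at htS
    have h0 : (0:ℝ) ≤ s - 2 * ε := by linarith
    rcases lt_or_ge 0 (volume (levelSet B (s - 2 * ε))) with hpos | hzero
    · have hA0 : volume (levelSet A (s - 2 * ε + ε)) = 0 :=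
        le_antisymm (htS h0 hpos) zero_le
      have heq : s - 2 * ε + ε = s - ε := by ring
      rw [heq] at hA0
      calc volume (levelSet B s) ≤ volume (levelSet A (s - ε)) + ENNReal.ofReal ε :=
            hcompare s (by linarith)
        _ = ENNReal.ofReal ε := by rw [hA0, zero_add]
    · have : volume (levelSet B s) = 0 :=
        le_antisymm (le_trans (hanti (by linarith : s - 2 * ε ≤ s)) hzero) zero_le
      simp [this]
  set m := max γ (σ + 2 * ε) with hm
  have h1 : σ ≤ σ + 2 * ε := by linarith
  have h2 : σ + 2 * ε ≤ m := le_max_right _ _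
  have hsplit1 : Set.Ioi σ = Set.Ioc σ (σ + 2 * ε) ∪ Set.Ioi (σ + 2 * ε) :=
    (Set.Ioc_union_Ioi_eq_Ioi h1).symm
  have hsplit2 : Set.Ioi (σ + 2 * ε) = Set.Ioc (σ + 2 * ε) m ∪ Set.Ioi m :=
    (Set.Ioc_union_Ioi_eq_Ioi h2).symm
  rw [hsplit1, lintegral_union measurableSet_Ioi (Set.Ioc_disjoint_Ioi le_rfl),
    hsplit2, lintegral_union measurableSet_Ioi (Set.Ioc_disjoint_Ioi le_rfl)]
  have hp1 : ∫⁻ s in Set.Ioc σ (σ + 2 * ε), volume (levelSet B s)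
      ≤ ENNReal.ofReal γ * ENNReal.ofReal (2 * ε) := by
    calc ∫⁻ s in Set.Ioc σ (σ + 2 * ε), volume (levelSet B s)
        ≤ ∫⁻ _ in Set.Ioc σ (σ + 2 * ε), ENNReal.ofReal γ :=
          setLIntegral_mono' measurableSet_Ioc fun s _ => hfγ s
      _ = ENNReal.ofReal γ * volume (Set.Ioc σ (σ + 2 * ε)) := setLIntegral_const _ _
      _ = ENNReal.ofReal γ * ENNReal.ofReal (2 * ε) := by
          rw [Real.volume_Ioc]; ring_nf
  have hp2 : ∫⁻ s in Set.Ioc (σ + 2 * ε) m, volume (levelSet B s)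
      ≤ ENNReal.ofReal ε * ENNReal.ofReal γ := by
    calc ∫⁻ s in Set.Ioc (σ + 2 * ε) m, volume (levelSet B s)
        ≤ ∫⁻ _ in Set.Ioc (σ + 2 * ε) m, ENNReal.ofReal ε :=
          setLIntegral_mono' measurableSet_Ioc fun s hs => hkey s hs.1
      _ = ENNReal.ofReal ε * volume (Set.Ioc (σ + 2 * ε) m) := setLIntegral_const _ _
      _ ≤ ENNReal.ofReal ε * ENNReal.ofReal γ := by
          rw [Real.volume_Ioc]
          refine mul_le_mul_right (ENNReal.ofReal_le_ofReal ?_) _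
          rcases max_cases γ (σ + 2 * ε) with ⟨hmv, _⟩ | ⟨hmv, _⟩ <;> rw [hm, hmv] <;> linarith
  have hp3 : ∫⁻ s in Set.Ioi m, volume (levelSet B s) = 0 := by
    have : ∫⁻ s in Set.Ioi m, volume (levelSet B s) ≤ ∫⁻ _ in Set.Ioi m, (0:ℝ≥0∞) :=
      setLIntegral_mono' measurableSet_Ioi fun s hs =>
        le_of_eq (hvanish s (lt_of_le_of_lt (le_max_left _ _) hs))
    simpa using this
  calc (∫⁻ s in Set.Ioc σ (σ + 2 * ε), volume (levelSet B s))
        + ((∫⁻ s in Set.Ioc (σ + 2 * ε) m, volume (levelSet B s))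
          + ∫⁻ s in Set.Ioi m, volume (levelSet B s))
      ≤ ENNReal.ofReal γ * ENNReal.ofReal (2 * ε)
        + (ENNReal.ofReal ε * ENNReal.ofReal γ + 0) :=
        add_le_add hp1 (add_le_add hp2 hp3.le)
    _ = ENNReal.ofReal (γ * (2 * ε) + ε * γ) := by
        rw [add_zero, ← ENNReal.ofReal_mul hγ0, ← ENNReal.ofReal_mul hε.le,
          ← ENNReal.ofReal_add (by positivity) (by positivity)]
    _ ≤ ENNReal.ofReal (3 * γ * ε) := ENNReal.ofReal_le_ofReal (by nlinarith)
end
end
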